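/- arXiv:2110.07486 — 5 statements merged into one kernel-verified Lean document; each statement's English description precedes it below -/
import Mathlib

section
/- Let V and Q be real Hilbert spaces, A : V → V' a linear operator such that ⟨Au, v⟩ is an inner product on V with induced norm ‖·‖_A, B : V → Q' linear, and suppose there is ζ₀ > 0 such that for every p ∈ Q there exists v^p ∈ V with ⟨B v^p, p⟩ = |p|_B² and ζ₀ ‖v^p‖_A ≤ |p|_B, where |·|_B is a seminorm on Q. Let C : Q → Q' be such that ⟨Cp, q⟩ is a semi-inner product with seminorm |·|_C. Define 𝒜(u,p) = (Au + B'p, Bu − Cp). Then for every (u,p) there exists (v,q) with ⟨𝒜(u,p),(v,q)⟩ ≥ (min{1, ζ₀²}/2)·(‖u‖_A² + |p|_B² + |p|_C²). -/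
/-- Abstract perturbed saddle point lower bound (Theorem 3.1 of the paper, eq. (3.12)):
for every `(u, p)` there is a test pair `(v, q)` with
`⟨𝒜(u,p),(v,q)⟩ ≥ (min{1, ζ₀²}/2) (‖u‖_A² + |p|_B² + |p|_C²)`. -/
theorem stmt_0 {V Q : Type*} [AddCommGroup V] [Module ℝ V] [AddCommGroup Q] [Module ℝ Q]
    (a : V →ₗ[ℝ] V →ₗ[ℝ] ℝ)
    (ha_symm : ∀ u v : V, a u v = a v u)
    (ha_pos : ∀ u : V, 0 ≤ a u u)
    (ha_def : ∀ u : V, a u u = 0 → u = 0)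
    (b : V →ₗ[ℝ] Q →ₗ[ℝ] ℝ)
    (c : Q →ₗ[ℝ] Q →ₗ[ℝ] ℝ)
    (hc_symm : ∀ p q : Q, c p q = c q p)
    (hc_pos : ∀ p : Q, 0 ≤ c p p)
    (nB : Seminorm ℝ Q)
    (ζ₀ : ℝ) (hζ₀ : 0 < ζ₀)
    (hinfsup : ∀ p : Q, ∃ vp : V,
      b vp p = (nB p) ^ 2 ∧ ζ₀ * Real.sqrt (a vp vp) ≤ nB p) :
    ∀ (u : V) (p : Q), ∃ (v : V) (q : Q),
      a u v + b v p + b u q - c p q ≥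
        (min 1 (ζ₀ ^ 2) / 2) * (a u u + (nB p) ^ 2 + c p p) := by
  intro u p
  obtain ⟨vp, h1, h2⟩ := hinfsup p
  refine ⟨u + (ζ₀ ^ 2) • vp, -p, ?_⟩
  have hav : (0:ℝ) ≤ a vp vp := ha_pos vp
  -- square h2
  have hsq : ζ₀ ^ 2 * a vp vp ≤ (nB p) ^ 2 := by
    have h2' : (ζ₀ * Real.sqrt (a vp vp)) ^ 2 ≤ (nB p) ^ 2 := by
      apply sq_le_sq'
      · nlinarith [Real.sqrt_nonneg (a vp vp), hζ₀.le, apply_nonneg nB p]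
      · exact h2
    calc ζ₀ ^ 2 * a vp vp = (ζ₀ * Real.sqrt (a vp vp)) ^ 2 := by
          rw [mul_pow, Real.sq_sqrt hav]
      _ ≤ (nB p) ^ 2 := h2'
  have hpos : (0:ℝ) ≤ a (u + (ζ₀ ^ 2) • vp) (u + (ζ₀ ^ 2) • vp) := ha_pos _
  have hexp : a (u + (ζ₀ ^ 2) • vp) (u + (ζ₀ ^ 2) • vp)
      = a u u + 2 * ζ₀ ^ 2 * a u vp + ζ₀ ^ 4 * a vp vp := by
    simp [map_add, LinearMap.add_apply, map_smul, LinearMap.smul_apply, smul_eq_mul,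
      ha_symm vp u]
    ring
  rw [hexp] at hpos
  have hlhs : a u (u + (ζ₀ ^ 2) • vp) + b (u + (ζ₀ ^ 2) • vp) p + b u (-p) - c p (-p)
      = a u u + ζ₀ ^ 2 * a u vp + ζ₀ ^ 2 * (nB p) ^ 2 + c p p := by
    simp [map_add, LinearMap.add_apply, map_smul, LinearMap.smul_apply, smul_eq_mul, h1]
    ring
  rw [ge_iff_le, hlhs]
  have hm1 : min 1 (ζ₀ ^ 2) ≤ 1 := min_le_left _ _
  have hm2 : min 1 (ζ₀ ^ 2) ≤ ζ₀ ^ 2 := min_le_right _ _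
  nlinarith [ha_pos u, hc_pos p, sq_nonneg (nB p), sq_nonneg ζ₀]
end

section
/- Let V, Q be Hilbert spaces and let 𝒜 = [[A, B'],[B, −C]] with A inducing an inner product norm ‖·‖_A on V, C inducing a semi-norm |·|_C on Q, B : V → Q' bounded and satisfying the inf-sup condition 0 < ζ₀ ≤ sup_{v∈V} ⟨Bv, p⟩/(‖v‖_A |p|_B) ≤ ζ_∞ < ∞ for all p ∈ Q, where ⦀(u,p)⦀² := ‖u‖_A² + |p|_B² + |p|_C² defines a norm on V × Q making it complete. Then the symmetric bilinear form a((u,p),(v,q)) := ⟨Au,v⟩ + ⟨Bv,p⟩ + ⟨Bu,q⟩ − ⟨Cp,q⟩ satisfies the inf-sup condition inf_{(u,p)} sup_{(v,q)} a((u,p),(v,q)) / (⦀(u,p)⦀ ⦀(v,q)⦀) ≥ min{1, ζ₀²} / (2 √(max{2, 1 + 2ζ₀²})) > 0. -/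
set_option maxHeartbeats 1000000


/-- Quantitative inf-sup bound for the perturbed saddle-point form (Theorem 3.1):
`inf sup a((u,p),(v,q)) / (⦀(u,p)⦀ ⦀(v,q)⦀) ≥ min{1,ζ₀²} / (2 √(max{2, 1+2ζ₀²})) > 0`,
stated as: the constant is positive and for every nonzero `(u,p)` there is a nonzero
`(v,q)` realizing the bound. -/
theorem stmt_2 {V Q : Type*} [AddCommGroup V] [Module ℝ V] [AddCommGroup Q] [Module ℝ Q]
    (a : V →ₗ[ℝ] V →ₗ[ℝ] ℝ)
    (ha_symm : ∀ u v : V, a u v = a v u)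
    (ha_pos : ∀ u : V, 0 ≤ a u u)
    (ha_def : ∀ u : V, a u u = 0 → u = 0)
    (b : V →ₗ[ℝ] Q →ₗ[ℝ] ℝ)
    (c : Q →ₗ[ℝ] Q →ₗ[ℝ] ℝ)
    (hc_symm : ∀ p q : Q, c p q = c q p)
    (hc_pos : ∀ p : Q, 0 ≤ c p p)
    (nB : Seminorm ℝ Q)
    (ζ₀ ζinf : ℝ) (hζ₀ : 0 < ζ₀)
    (hcont : ∀ (v : V) (p : Q), b v p ≤ ζinf * Real.sqrt (a v v) * nB p)
    (hinfsup : ∀ p : Q, ∃ vp : V,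
      b vp p = (nB p) ^ 2 ∧ ζ₀ * Real.sqrt (a vp vp) ≤ nB p)
    (hnorm : ∀ (u : V) (p : Q), a u u + (nB p) ^ 2 + c p p = 0 → u = 0 ∧ p = 0) :
    0 < min 1 (ζ₀ ^ 2) / (2 * Real.sqrt (max 2 (1 + 2 * ζ₀ ^ 2))) ∧
    ∀ (u : V) (p : Q), ¬(u = 0 ∧ p = 0) →
      ∃ (v : V) (q : Q), ¬(v = 0 ∧ q = 0) ∧
        a u v + b v p + b u q - c p q ≥
          (min 1 (ζ₀ ^ 2) / (2 * Real.sqrt (max 2 (1 + 2 * ζ₀ ^ 2)))) *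
            Real.sqrt (a u u + (nB p) ^ 2 + c p p) *
            Real.sqrt (a v v + (nB q) ^ 2 + c q q) := by
  have hδpos : 0 < min 1 (ζ₀ ^ 2) := lt_min one_pos (by positivity)
  have hM2 : (2:ℝ) ≤ max 2 (1 + 2 * ζ₀ ^ 2) := le_max_left _ _
  have hM1 : (1 + 2 * ζ₀ ^ 2) ≤ max 2 (1 + 2 * ζ₀ ^ 2) := le_max_right _ _
  have hMpos : (0:ℝ) < max 2 (1 + 2 * ζ₀ ^ 2) := lt_of_lt_of_le two_pos hM2
  have hsqrtM : 0 < Real.sqrt (max 2 (1 + 2 * ζ₀ ^ 2)) := Real.sqrt_pos.mpr hMpos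
  obtain ⟨δ, hδdef⟩ : ∃ δ : ℝ, δ = min 1 (ζ₀ ^ 2) := ⟨_, rfl⟩
  obtain ⟨M, hMdef⟩ : ∃ M : ℝ, M = max 2 (1 + 2 * ζ₀ ^ 2) := ⟨_, rfl⟩
  rw [← hδdef] at hδpos
  rw [← hMdef] at hM2 hM1 hMpos hsqrtM
  have hδ1 : δ ≤ 1 := hδdef ▸ min_le_left _ _
  have hδζ : δ ≤ ζ₀ ^ 2 := hδdef ▸ min_le_right _ _
  have hMone : (1:ℝ) ≤ M := by linarith
  have hkpos : 0 < δ / (2 * Real.sqrt M) := by positivity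
  rw [← hδdef, ← hMdef]
  refine ⟨hkpos, ?_⟩
  -- Cauchy–Schwarz for `a`
  have CS : ∀ x y : V, a x y ≤ Real.sqrt (a x x) * Real.sqrt (a y y) := by
    intro x y
    have hq : ∀ t : ℝ, 0 ≤ a x x * (t * t) + (2 * a x y) * t + a y y := by
      intro t
      have key : a (t • x + y) (t • x + y)
          = a x x * (t * t) + (2 * a x y) * t + a y y := by
        simp only [map_add, map_smul, LinearMap.add_apply, LinearMap.smul_apply,
          smul_eq_mul]
        linear_combination t * ha_symm y x
      rw [← key]; exact ha_pos _
    have hd := discrim_le_zero hq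
    rw [discrim] at hd
    have h1 : (a x y) ^ 2 ≤ a x x * a y y := by nlinarith
    calc a x y ≤ |a x y| := le_abs_self _
      _ = Real.sqrt ((a x y) ^ 2) := (Real.sqrt_sq_eq_abs _).symm
      _ ≤ Real.sqrt (a x x * a y y) := Real.sqrt_le_sqrt h1
      _ = _ := Real.sqrt_mul (ha_pos x) _
  intro u p hup
  obtain ⟨vp, hb, hvp⟩ := hinfsup p
  obtain ⟨X, hXdef⟩ : ∃ X : ℝ, X = a u u + (nB p) ^ 2 + c p p := ⟨_, rfl⟩
  have hXnn : 0 ≤ X := by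
    have := ha_pos u; have := hc_pos p; have := sq_nonneg (nB p); rw [hXdef]; linarith
  have hXpos : 0 < X := by
    rcases lt_or_eq_of_le hXnn with h | h
    · exact h
    · exact absurd (hnorm u p (hXdef ▸ h.symm)) hup
  obtain ⟨s, hsdef⟩ : ∃ s : ℝ, s = Real.sqrt (a u u) := ⟨_, rfl⟩
  obtain ⟨t, htdef⟩ : ∃ t : ℝ, t = Real.sqrt (a vp vp) := ⟨_, rfl⟩
  have hs2 : s ^ 2 = a u u := by rw [hsdef]; exact Real.sq_sqrt (ha_pos u)
  have ht2 : t ^ 2 = a vp vp := by rw [htdef]; exact Real.sq_sqrt (ha_pos vp)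
  have hsnn : 0 ≤ s := hsdef ▸ Real.sqrt_nonneg _
  have htnn : 0 ≤ t := htdef ▸ Real.sqrt_nonneg _
  have hζt : ζ₀ * t ≤ nB p := htdef ▸ hvp
  have hnnn : 0 ≤ nB p := apply_nonneg nB p
  have hn2 : ζ₀ ^ 2 * t ^ 2 ≤ (nB p) ^ 2 := by
    nlinarith [mul_nonneg hζ₀.le htnn]
  have hup' : a u vp ≤ s * t := by rw [hsdef, htdef]; exact CS u vp
  have hlow : -(s * t) ≤ a u vp := by
    have h1 : a u (-vp) = -(a u vp) := map_neg (a u) vp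
    have h2 : a (-vp) (-vp) = a vp vp := by
      have h3 : a (-vp) = -(a vp) := map_neg a vp
      rw [h3]; simp
    have := CS u (-vp)
    rw [h1, h2, ← hsdef, ← htdef] at this
    linarith
  have hcpp : 0 ≤ c p p := hc_pos p
  have hS : a u (u + δ • vp) + b (u + δ • vp) p + b u (-p) - c p (-p)
      = a u u + δ * a u vp + δ * (nB p) ^ 2 + c p p := by
    simp only [map_add, map_smul, map_neg, LinearMap.add_apply, LinearMap.smul_apply,
      LinearMap.neg_apply, smul_eq_mul, hb]
    ring
  have hlb : a u u + δ * a u vp + δ * (nB p) ^ 2 + c p p ≥ (δ / 2) * X := by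
    rw [hXdef, ← hs2]
    have h1 : 0 ≤ δ * (a u vp + s * t) := mul_nonneg hδpos.le (by linarith)
    have h3 : δ ^ 2 * t ^ 2 ≤ δ * (nB p) ^ 2 := by
      nlinarith [mul_nonneg hδpos.le (mul_nonneg (sub_nonneg.mpr hδζ) (sq_nonneg t)),
        mul_nonneg hδpos.le (sub_nonneg.mpr hn2)]
    have h4 : 0 ≤ (1 - δ) * s ^ 2 := mul_nonneg (by linarith) (sq_nonneg s)
    have h5 : 0 ≤ (1 - δ / 2) * c p p := mul_nonneg (by linarith) hcpp
    nlinarith [sq_nonneg (s - δ * t), h1, h3, h4, h5]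
  refine ⟨u + δ • vp, -p, ?_, ?_⟩
  · rintro ⟨hv, hq⟩
    have h0 : a u (u + δ • vp) + b (u + δ • vp) p + b u (-p) - c p (-p) = 0 := by
      rw [hv, hq]; simp
    rw [hS] at h0
    have : (0:ℝ) < (δ / 2) * X := by positivity
    linarith
  · rw [hS, ← hXdef]
    obtain ⟨Y, hYdef⟩ : ∃ Y : ℝ,
        Y = a (u + δ • vp) (u + δ • vp) + (nB (-p)) ^ 2 + c (-p) (-p) := ⟨_, rfl⟩
    rw [← hYdef]
    have hnBneg : nB (-p) = nB p := map_neg_eq_map nB p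
    have hcneg : c (-p) (-p) = c p p := by simp
    have havv : a (u + δ • vp) (u + δ • vp)
        = a u u + 2 * δ * a u vp + δ ^ 2 * a vp vp := by
      simp only [map_add, map_smul, LinearMap.add_apply, LinearMap.smul_apply, smul_eq_mul]
      linear_combination δ * ha_symm vp u
    have hYnn : 0 ≤ Y := by
      rw [hYdef]
      have := ha_pos (u + δ • vp); have := hc_pos (-p); have := sq_nonneg (nB (-p))
      linarith
    have hYM : Y ≤ M * X := by
      rw [hYdef, hnBneg, hcneg, havv, hXdef, ← hs2, ← ht2]
      have h1 : 2 * δ * a u vp ≤ s ^ 2 + δ ^ 2 * t ^ 2 := by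
        nlinarith [sq_nonneg (s - δ * t), mul_nonneg hδpos.le (sub_nonneg.mpr hup')]
      have h4a : δ ^ 2 ≤ ζ₀ ^ 2 * ζ₀ ^ 2 := by nlinarith
      have h4 : δ ^ 2 * t ^ 2 ≤ ζ₀ ^ 2 * (nB p) ^ 2 := by
        nlinarith [mul_nonneg (sub_nonneg.mpr h4a) (sq_nonneg t),
          mul_nonneg (by positivity : (0:ℝ) ≤ ζ₀ ^ 2) (sub_nonneg.mpr hn2)]
      have h5 : 0 ≤ (M - 2) * s ^ 2 := mul_nonneg (by linarith) (sq_nonneg s)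
      have h6 : 0 ≤ (M - (1 + 2 * ζ₀ ^ 2)) * (nB p) ^ 2 :=
        mul_nonneg (by linarith) (sq_nonneg _)
      have h7 : 0 ≤ (M - 1) * c p p := mul_nonneg (by linarith) hcpp
      nlinarith
    have hsY : Real.sqrt Y ≤ Real.sqrt M * Real.sqrt X := by
      rw [← Real.sqrt_mul hMpos.le]
      exact Real.sqrt_le_sqrt hYM
    have hsX2 : Real.sqrt X * Real.sqrt X = X := Real.mul_self_sqrt hXnn
    have hfac : (δ / (2 * Real.sqrt M)) * Real.sqrt M = δ / 2 := by
      field_simp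
    calc (δ / (2 * Real.sqrt M)) * Real.sqrt X * Real.sqrt Y
        ≤ (δ / (2 * Real.sqrt M)) * Real.sqrt X * (Real.sqrt M * Real.sqrt X) := by
          apply mul_le_mul_of_nonneg_left hsY
          positivity
      _ = (δ / (2 * Real.sqrt M)) * Real.sqrt M * (Real.sqrt X * Real.sqrt X) := by ring
      _ = (δ / 2) * X := by rw [hfac, hsX2]
      _ ≤ _ := hlb
end

section
/- Let V, Q be Hilbert spaces and suppose 𝒜 = [[A, B'],[B, −C]] satisfies: ⟨A·,·⟩ is an inner product on V, ⟨C·,·⟩ is a semi-inner product on Q, B is bounded with constant ζ_∞ and satisfies the inf-sup condition with constant ζ₀ > 0, and the energy norm ⦀(u,p)⦀² = ‖u‖_A² + |p|_B² + |p|_C² makes V × Q a complete normed space. Then for every (f,g) ∈ (V × Q)' the problem 𝒜(u,p) = (f,g) is well-posed: it has a unique solution (u,p), and ⦀(u,p)⦀ ≤ C₀ ‖(f,g)‖_{(V×Q)'} with a constant C₀ depending only on ζ₀. -/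
/-!
For a solution `(u, p)` choose `v_p` from the inf-sup condition and test the equations with
`(u + ζ₀² v_p, -p)`: the tested right-hand side dominates `min(1, ζ₀²)/2 · ⦀(u, p)⦀²`, while
`⦀(u + ζ₀² v_p, -p)⦀ ≤ √(2(1 + ζ₀²)) ⦀(u, p)⦀`. This gives the a priori bound, and uniqueness by
linearity.

Existence is by eliminating `u`. The Riesz lift `L : Q → V`, `a (L p) v = b v p`, satisfies
`ζ₀ |p|_B ≤ ‖L p‖_A` by the inf-sup condition and `‖L p‖_A ≤ ζ∞ |p|_B` by continuity, so
`a (L p) (L q) + c p q` is an inner product on `Q` whose norm is equivalent to the energy norm on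
`{0} × Q`, hence complete. With `x` the Riesz representative of `f`, the pressure is the Riesz
representative of `q ↦ a x (L q) - g q` for this inner product, and `u = x - L p`.
-/

def IsCompleteFor {X : Type*} [AddCommGroup X] (N : X → ℝ) : Prop :=
  ∀ s : ℕ → X, (∀ ε > (0 : ℝ), ∃ K, ∀ m ≥ K, ∀ n ≥ K, N (s m - s n) < ε) →
    ∃ w, ∀ ε > (0 : ℝ), ∃ K, ∀ n ≥ K, N (s n - w) < ε

namespace IsCompleteFor

variable {X Y : Type*} [AddCommGroup X] [AddCommGroup Y]

theorem of_retract {N : X → ℝ} {N' : Y → ℝ} (hN : IsCompleteFor N) (ι : Y →+ X) (π : X →+ Y)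
    (hπι : ∀ y, π (ι y) = y) {C C' : ℝ} (hC : 0 < C) (hC' : 0 < C')
    (hι : ∀ y, N (ι y) ≤ C * N' y) (hπ : ∀ x, N' (π x) ≤ C' * N x) : IsCompleteFor N' := by
  intro s hs
  obtain ⟨w, hw⟩ := hN (ι ∘ s) fun ε hε => by
    obtain ⟨K, hK⟩ := hs (ε / C) (by positivity)
    refine ⟨K, fun m hm n hn => ?_⟩
    calc N (ι (s m) - ι (s n)) = N (ι (s m - s n)) := by rw [map_sub]
      _ ≤ C * N' (s m - s n) := hι _
      _ < C * (ε / C) := by gcongr; exact hK m hm n hn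
      _ = ε := mul_div_cancel₀ ε hC.ne'
  refine ⟨π w, fun ε hε => ?_⟩
  obtain ⟨K, hK⟩ := hw (ε / C') (by positivity)
  refine ⟨K, fun n hn => ?_⟩
  calc N' (s n - π w) = N' (π (ι (s n) - w)) := by rw [map_sub, hπι]
    _ ≤ C' * N (ι (s n) - w) := hπ _
    _ < C' * (ε / C') := by gcongr; exact hK n hn
    _ = ε := mul_div_cancel₀ ε hC'.ne'

theorem completeSpace {E : Type*} [NormedAddCommGroup E] (hE : IsCompleteFor (‖·‖ : E → ℝ)) :
    CompleteSpace E := by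
  refine Metric.complete_of_cauchySeq_tendsto fun s hs => ?_
  obtain ⟨w, hw⟩ := hE s fun ε hε => by
    simpa only [← dist_eq_norm] using Metric.cauchySeq_iff.mp hs ε hε
  exact ⟨w, Metric.tendsto_atTop.mpr fun ε hε => by simpa only [dist_eq_norm] using hw ε hε⟩

end IsCompleteFor

section BilinForm

variable {E F : Type*} [AddCommGroup E] [Module ℝ E] [AddCommGroup F] [Module ℝ F]
  {s : E →ₗ[ℝ] E →ₗ[ℝ] ℝ}

theorem bilin_sq_le (hs_symm : ∀ x y, s x y = s y x) (hs_nonneg : ∀ x, 0 ≤ s x x) (x y : E) :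
    s x y ^ 2 ≤ s x x * s y y := by
  rw [sq]
  nth_rw 2 [hs_symm]
  exact LinearMap.BilinForm.apply_mul_apply_le_of_forall_zero_le s hs_nonneg x y

theorem bilin_add_smul_self (hs_symm : ∀ x y, s x y = s y x) (x y : E) (t : ℝ) :
    s (x + t • y) (x + t • y) = s x x + 2 * t * s x y + t ^ 2 * s y y := by
  simp only [map_add, map_smul, LinearMap.add_apply, LinearMap.smul_apply, smul_eq_mul,
    hs_symm y x]
  ring

theorem bilin_ext (hs_def : ∀ x, s x x = 0 → x = 0) {x y : E} (h : ∀ z, s x z = s y z) : x = y :=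
  sub_eq_zero.mp <| hs_def _ <| by simp only [map_sub, LinearMap.sub_apply, h, sub_self]

abbrev innerCoreOfBilin (s : E →ₗ[ℝ] E →ₗ[ℝ] ℝ) (hs_symm : ∀ x y, s x y = s y x)
    (hs_nonneg : ∀ x, 0 ≤ s x x) (hs_def : ∀ x, s x x = 0 → x = 0) :
    InnerProductSpace.Core ℝ E where
  inner x y := s x y
  conj_inner_symm x y := hs_symm y x
  re_inner_nonneg := hs_nonneg
  add_left x y z := by simp
  smul_left x y r := by simp
  definite := hs_def

theorem exists_bilin_eq_of_abs_le (hs_symm : ∀ x y, s x y = s y x) (hs_nonneg : ∀ x, 0 ≤ s x x)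
    (hs_def : ∀ x, s x x = 0 → x = 0) (hs_compl : IsCompleteFor fun x => √(s x x))
    (f : E →ₗ[ℝ] ℝ) {C : ℝ} (hf : ∀ x, |f x| ≤ C * √(s x x)) : ∃ u, ∀ x, s u x = f x := by
  let core := innerCoreOfBilin s hs_symm hs_nonneg hs_def
  let : NormedAddCommGroup E := core.toNormedAddCommGroup
  let : InnerProductSpace ℝ E := InnerProductSpace.ofCore core.toCore
  have : CompleteSpace E := hs_compl.completeSpace
  exact ⟨(InnerProductSpace.toDual ℝ E).symm (f.mkContinuous C hf),
    fun _ => InnerProductSpace.toDual_symm_apply (𝕜 := ℝ) (E := E)⟩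

theorem exists_linearMap_bilin_eq (hs_symm : ∀ x y, s x y = s y x) (hs_nonneg : ∀ x, 0 ≤ s x x)
    (hs_def : ∀ x, s x x = 0 → x = 0) (hs_compl : IsCompleteFor fun x => √(s x x))
    (b : E →ₗ[ℝ] F →ₗ[ℝ] ℝ) (hb : ∀ y, ∃ C, ∀ x, |b x y| ≤ C * √(s x x)) :
    ∃ L : F →ₗ[ℝ] E, ∀ y x, s (L y) x = b x y := by
  choose L hL using fun y =>
    have ⟨_, hC⟩ := hb y
    exists_bilin_eq_of_abs_le hs_symm hs_nonneg hs_def hs_compl (b.flip y) hC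
  refine ⟨{ toFun := L, map_add' := ?_, map_smul' := ?_ }, hL⟩
  · exact fun y y' => bilin_ext hs_def fun x => by simp [hL]
  · exact fun r y => bilin_ext hs_def fun x => by simp [hL]

end BilinForm

theorem mul_le_of_mul_sq_le_mul {γ K E : ℝ} (hK : 0 ≤ K) (hE : 0 ≤ E) (h : γ * E ^ 2 ≤ K * E) :
    γ * E ≤ K := by
  rcases hE.eq_or_lt with rfl | hE
  · simpa using hK
  · exact le_of_mul_le_mul_right (by linarith) hE

section SaddlePoint

variable {V Q : Type*} [AddCommGroup V] [Module ℝ V] [AddCommGroup Q] [Module ℝ Q]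

noncomputable def energyNorm (a : V →ₗ[ℝ] V →ₗ[ℝ] ℝ) (c : Q →ₗ[ℝ] Q →ₗ[ℝ] ℝ) (nB : Seminorm ℝ Q)
    (w : V × Q) : ℝ :=
  √(a w.1 w.1 + nB w.2 ^ 2 + c w.2 w.2)

def IsSaddleSolution (a : V →ₗ[ℝ] V →ₗ[ℝ] ℝ) (b : V →ₗ[ℝ] Q →ₗ[ℝ] ℝ)
    (c : Q →ₗ[ℝ] Q →ₗ[ℝ] ℝ) (f : V →ₗ[ℝ] ℝ) (g : Q →ₗ[ℝ] ℝ) (w : V × Q) : Prop :=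
  (∀ v : V, a w.1 v + b v w.2 = f v) ∧ ∀ q : Q, b w.1 q - c w.2 q = g q

/-- With `L = A⁻¹B'` this is the Schur complement `B A⁻¹ B' + C`. -/
def schurComplement (a : V →ₗ[ℝ] V →ₗ[ℝ] ℝ) (L : Q →ₗ[ℝ] V) (c : Q →ₗ[ℝ] Q →ₗ[ℝ] ℝ) :
    Q →ₗ[ℝ] Q →ₗ[ℝ] ℝ :=
  a.compl₁₂ L L + c

noncomputable def stabilityConst (ζ₀ : ℝ) : ℝ := 2 * √(2 * (1 + ζ₀ ^ 2)) / min 1 (ζ₀ ^ 2)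

theorem stabilityConst_pos {ζ₀ : ℝ} (hζ₀ : 0 < ζ₀) : 0 < stabilityConst ζ₀ := by
  unfold stabilityConst
  have : 0 < min 1 (ζ₀ ^ 2) := lt_min one_pos (by positivity)
  positivity

variable {a : V →ₗ[ℝ] V →ₗ[ℝ] ℝ} {b : V →ₗ[ℝ] Q →ₗ[ℝ] ℝ} {c : Q →ₗ[ℝ] Q →ₗ[ℝ] ℝ}
  {nB : Seminorm ℝ Q} {ζ₀ : ℝ}

theorem schurComplement_apply (L : Q →ₗ[ℝ] V) (p q : Q) :
    schurComplement a L c p q = a (L p) (L q) + c p q := rfl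

theorem energyNorm_sq (ha_nonneg : ∀ u, 0 ≤ a u u) (hc_nonneg : ∀ p, 0 ≤ c p p) (w : V × Q) :
    energyNorm a c nB w ^ 2 = a w.1 w.1 + nB w.2 ^ 2 + c w.2 w.2 :=
  Real.sq_sqrt (by have := ha_nonneg w.1; have := hc_nonneg w.2; positivity)

theorem energyNorm_inl (u : V) : energyNorm a c nB (u, 0) = √(a u u) := by
  simp [energyNorm]

theorem energyNorm_inr (p : Q) : energyNorm a c nB (0, p) = √(nB p ^ 2 + c p p) := by
  simp [energyNorm]

theorem sqrt_le_energyNorm (hc_nonneg : ∀ p, 0 ≤ c p p) (w : V × Q) :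
    √(a w.1 w.1) ≤ energyNorm a c nB w :=
  Real.sqrt_le_sqrt (by have := hc_nonneg w.2; nlinarith)

theorem exists_sq_le_of_infSup (hζ₀ : 0 ≤ ζ₀) (ha_nonneg : ∀ u, 0 ≤ a u u)
    (hinfsup : ∀ p : Q, ∃ vp : V, b vp p = nB p ^ 2 ∧ ζ₀ * √(a vp vp) ≤ nB p) (p : Q) :
    ∃ vp, b vp p = nB p ^ 2 ∧ ζ₀ ^ 2 * a vp vp ≤ nB p ^ 2 := by
  obtain ⟨vp, hvp, hle⟩ := hinfsup p
  refine ⟨vp, hvp, ?_⟩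
  calc ζ₀ ^ 2 * a vp vp = (ζ₀ * √(a vp vp)) ^ 2 := by rw [mul_pow, Real.sq_sqrt (ha_nonneg vp)]
    _ ≤ nB p ^ 2 := by gcongr

theorem energyNorm_sq_le_test (ha_symm : ∀ u v, a u v = a v u) (ha_nonneg : ∀ u, 0 ≤ a u u)
    (hc_nonneg : ∀ p, 0 ≤ c p p) {f : V →ₗ[ℝ] ℝ} {g : Q →ₗ[ℝ] ℝ} {u vp : V} {p : Q}
    (hw : IsSaddleSolution a b c f g (u, p)) (hvp : b vp p = nB p ^ 2)
    (hvp_le : ζ₀ ^ 2 * a vp vp ≤ nB p ^ 2) :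
    min 1 (ζ₀ ^ 2) / 2 * energyNorm a c nB (u, p) ^ 2 ≤ f (u + ζ₀ ^ 2 • vp) + g (-p) := by
  have htest : f (u + ζ₀ ^ 2 • vp) + g (-p) =
      a u u + ζ₀ ^ 2 * a u vp + ζ₀ ^ 2 * nB p ^ 2 + c p p := by
    rw [← hw.1, ← hw.2]
    simp only [map_add, map_smul, map_neg, LinearMap.add_apply, LinearMap.smul_apply,
      smul_eq_mul, hvp]
    ring
  have hplus := bilin_add_smul_self ha_symm u vp (ζ₀ ^ 2) ▸ ha_nonneg (u + ζ₀ ^ 2 • vp)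
  rw [htest, energyNorm_sq ha_nonneg hc_nonneg]
  have := ha_nonneg u
  have := hc_nonneg p
  have := min_le_left 1 (ζ₀ ^ 2)
  have := min_le_right 1 (ζ₀ ^ 2)
  nlinarith [mul_le_mul_of_nonneg_left hvp_le (sq_nonneg ζ₀)]

theorem energyNorm_test_le (ha_symm : ∀ u v, a u v = a v u) (ha_nonneg : ∀ u, 0 ≤ a u u)
    (hc_nonneg : ∀ p, 0 ≤ c p p) {u vp : V} {p : Q} (hvp_le : ζ₀ ^ 2 * a vp vp ≤ nB p ^ 2) :
    energyNorm a c nB (u + ζ₀ ^ 2 • vp, -p) ≤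
      √(2 * (1 + ζ₀ ^ 2)) * energyNorm a c nB (u, p) := by
  have hminus := bilin_add_smul_self ha_symm u vp (-ζ₀ ^ 2) ▸ ha_nonneg (u + (-ζ₀ ^ 2) • vp)
  rw [energyNorm, energyNorm, ← Real.sqrt_mul (by positivity)]
  refine Real.sqrt_le_sqrt ?_
  simp only [map_neg_eq_map, map_neg, LinearMap.neg_apply, neg_neg,
    bilin_add_smul_self ha_symm]
  have := ha_nonneg u
  have := hc_nonneg p
  nlinarith [mul_le_mul_of_nonneg_left hvp_le (sq_nonneg ζ₀)]

theorem energyNorm_le_of_isSaddleSolution (hζ₀ : 0 < ζ₀) (ha_symm : ∀ u v, a u v = a v u)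
    (ha_nonneg : ∀ u, 0 ≤ a u u) (hc_nonneg : ∀ p, 0 ≤ c p p)
    (hinfsup : ∀ p : Q, ∃ vp : V, b vp p = nB p ^ 2 ∧ ζ₀ * √(a vp vp) ≤ nB p)
    {f : V →ₗ[ℝ] ℝ} {g : Q →ₗ[ℝ] ℝ} {M : ℝ} (hM : 0 ≤ M)
    (hfg : ∀ w : V × Q, |f w.1 + g w.2| ≤ M * energyNorm a c nB w) {w : V × Q}
    (hw : IsSaddleSolution a b c f g w) : energyNorm a c nB w ≤ stabilityConst ζ₀ * M := by
  obtain ⟨u, p⟩ := w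
  obtain ⟨vp, hvp, hvp_le⟩ := exists_sq_le_of_infSup hζ₀.le ha_nonneg hinfsup p
  set E := energyNorm a c nB (u, p)
  set K := √(2 * (1 + ζ₀ ^ 2))
  have hkey : min 1 (ζ₀ ^ 2) / 2 * E ^ 2 ≤ M * K * E :=
    calc _ ≤ f (u + ζ₀ ^ 2 • vp) + g (-p) :=
          energyNorm_sq_le_test ha_symm ha_nonneg hc_nonneg hw hvp hvp_le
      _ ≤ M * energyNorm a c nB (u + ζ₀ ^ 2 • vp, -p) :=
          (le_abs_self _).trans (hfg (u + ζ₀ ^ 2 • vp, -p))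
      _ ≤ M * (K * E) := by gcongr; exact energyNorm_test_le ha_symm ha_nonneg hc_nonneg hvp_le
      _ = M * K * E := by ring
  have hkey' : min 1 (ζ₀ ^ 2) / 2 * E ≤ M * K :=
    mul_le_of_mul_sq_le_mul (by positivity) (Real.sqrt_nonneg _) hkey
  rw [stabilityConst, div_mul_eq_mul_div, le_div_iff₀ (lt_min one_pos (by positivity))]
  change E * min 1 (ζ₀ ^ 2) ≤ 2 * K * M
  linarith

theorem abs_le_of_le_mul_sqrt {ζ : ℝ} (hb : ∀ v p, b v p ≤ ζ * √(a v v) * nB p) (v : V) (p : Q) :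
    |b v p| ≤ ζ * nB p * √(a v v) := by
  have hneg := hb (-v) p
  simp only [map_neg, LinearMap.neg_apply, neg_neg] at hneg
  exact abs_le.mpr ⟨by linarith, by linarith [hb v p]⟩

theorem lift_lower_bound (hζ₀ : 0 ≤ ζ₀) (ha_symm : ∀ u v, a u v = a v u)
    (ha_nonneg : ∀ u, 0 ≤ a u u)
    (hinfsup : ∀ p : Q, ∃ vp : V, b vp p = nB p ^ 2 ∧ ζ₀ * √(a vp vp) ≤ nB p)
    {L : Q →ₗ[ℝ] V} (hL : ∀ p v, a (L p) v = b v p) (p : Q) :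
    ζ₀ ^ 2 * nB p ^ 2 ≤ a (L p) (L p) := by
  obtain ⟨vp, hvp, hvp_le⟩ := exists_sq_le_of_infSup hζ₀ ha_nonneg hinfsup p
  have hcs := bilin_sq_le ha_symm ha_nonneg (L p) vp
  rw [hL, hvp] at hcs
  rcases (sq_nonneg (nB p)).eq_or_lt with h0 | hpos
  · rw [← h0, mul_zero]
    exact ha_nonneg _
  · refine le_of_mul_le_mul_right ?_ hpos
    calc ζ₀ ^ 2 * nB p ^ 2 * nB p ^ 2 = ζ₀ ^ 2 * (nB p ^ 2) ^ 2 := by ring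
      _ ≤ ζ₀ ^ 2 * (a (L p) (L p) * a vp vp) := by gcongr
      _ = a (L p) (L p) * (ζ₀ ^ 2 * a vp vp) := by ring
      _ ≤ a (L p) (L p) * nB p ^ 2 := by gcongr; exact ha_nonneg _

theorem lift_upper_bound {ζ : ℝ} (hb : ∀ v p, b v p ≤ ζ * √(a v v) * nB p)
    (ha_nonneg : ∀ u, 0 ≤ a u u) {L : Q →ₗ[ℝ] V} (hL : ∀ p v, a (L p) v = b v p) (p : Q) :
    a (L p) (L p) ≤ ζ ^ 2 * nB p ^ 2 := by
  set r := √(a (L p) (L p))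
  have hr : r ^ 2 = a (L p) (L p) := Real.sq_sqrt (ha_nonneg _)
  have hr0 : 0 ≤ r := Real.sqrt_nonneg _
  rcases hr0.eq_or_lt with h0 | hpos
  · rw [← hr, ← h0, zero_pow two_ne_zero]
    positivity
  · have hle : r ≤ ζ * nB p := by
      refine le_of_mul_le_mul_right ?_ hpos
      calc r * r = b (L p) p := by rw [← sq, hr, hL]
        _ ≤ ζ * nB p * r := by linarith [hb (L p) p]
    rw [← hr, ← mul_pow]
    exact pow_le_pow_left₀ hpos.le hle 2

theorem schurComplement_symm (ha_symm : ∀ u v, a u v = a v u) (hc_symm : ∀ p q, c p q = c q p)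
    (L : Q →ₗ[ℝ] V) (p q : Q) : schurComplement a L c p q = schurComplement a L c q p := by
  rw [schurComplement_apply, schurComplement_apply, ha_symm, hc_symm]

theorem schurComplement_nonneg (ha_nonneg : ∀ u, 0 ≤ a u u) (hc_nonneg : ∀ p, 0 ≤ c p p)
    (L : Q →ₗ[ℝ] V) (p : Q) : 0 ≤ schurComplement a L c p p :=
  add_nonneg (ha_nonneg _) (hc_nonneg _)

theorem schurComplement_definite (hζ₀ : 0 < ζ₀) (ha_symm : ∀ u v, a u v = a v u)
    (ha_nonneg : ∀ u, 0 ≤ a u u) (hc_nonneg : ∀ p, 0 ≤ c p p)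
    (hinfsup : ∀ p : Q, ∃ vp : V, b vp p = nB p ^ 2 ∧ ζ₀ * √(a vp vp) ≤ nB p)
    (henergy_def : ∀ w, energyNorm a c nB w = 0 → w = 0)
    {L : Q →ₗ[ℝ] V} (hL : ∀ p v, a (L p) v = b v p) (p : Q)
    (hp : schurComplement a L c p p = 0) : p = 0 := by
  have hlow := lift_lower_bound hζ₀.le ha_symm ha_nonneg hinfsup hL p
  have := ha_nonneg (L p)
  have := hc_nonneg p
  rw [schurComplement_apply] at hp
  have hn : nB p ^ 2 = 0 := by nlinarith [sq_nonneg (nB p), sq_pos_of_pos hζ₀]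
  have hc : c p p = 0 := by linarith
  simpa using henergy_def (0, p) (by rw [energyNorm_inr, hn, hc, add_zero, Real.sqrt_zero])

theorem energyNorm_inr_le (hζ₀ : 0 < ζ₀) (ha_symm : ∀ u v, a u v = a v u)
    (ha_nonneg : ∀ u, 0 ≤ a u u) (hc_nonneg : ∀ p, 0 ≤ c p p)
    (hinfsup : ∀ p : Q, ∃ vp : V, b vp p = nB p ^ 2 ∧ ζ₀ * √(a vp vp) ≤ nB p)
    {L : Q →ₗ[ℝ] V} (hL : ∀ p v, a (L p) v = b v p) (p : Q) :
    energyNorm a c nB (0, p) ≤ √(1 + (ζ₀ ^ 2)⁻¹) * √(schurComplement a L c p p) := by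
  rw [energyNorm_inr, ← Real.sqrt_mul (by positivity)]
  refine Real.sqrt_le_sqrt ?_
  have hlow : nB p ^ 2 ≤ (ζ₀ ^ 2)⁻¹ * a (L p) (L p) := by
    rw [← div_eq_inv_mul, le_div_iff₀ (by positivity), mul_comm]
    exact lift_lower_bound hζ₀.le ha_symm ha_nonneg hinfsup hL p
  have := ha_nonneg (L p)
  have := hc_nonneg p
  rw [schurComplement_apply]
  nlinarith [inv_nonneg.mpr (sq_nonneg ζ₀)]

theorem isCompleteFor_schurComplement (hζ₀ : 0 < ζ₀) (ha_symm : ∀ u v, a u v = a v u)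
    (ha_nonneg : ∀ u, 0 ≤ a u u) (hc_nonneg : ∀ p, 0 ≤ c p p)
    {ζ : ℝ} (hb : ∀ v p, b v p ≤ ζ * √(a v v) * nB p)
    (hinfsup : ∀ p : Q, ∃ vp : V, b vp p = nB p ^ 2 ∧ ζ₀ * √(a vp vp) ≤ nB p)
    (hcompl : IsCompleteFor (energyNorm a c nB))
    {L : Q →ₗ[ℝ] V} (hL : ∀ p v, a (L p) v = b v p) :
    IsCompleteFor fun p => √(schurComplement a L c p p) := by
  refine hcompl.of_retract (AddMonoidHom.inr V Q) (AddMonoidHom.snd V Q) (fun _ => rfl)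
    (by positivity) (by positivity : 0 < √(1 + ζ ^ 2))
    (energyNorm_inr_le hζ₀ ha_symm ha_nonneg hc_nonneg hinfsup hL) fun w => ?_
  rw [AddMonoidHom.coe_snd, energyNorm, ← Real.sqrt_mul (by positivity)]
  refine Real.sqrt_le_sqrt ?_
  have hup := lift_upper_bound hb ha_nonneg hL w.2
  have := ha_nonneg w.1
  have := hc_nonneg w.2
  rw [schurComplement_apply]
  nlinarith [sq_nonneg ζ, sq_nonneg (nB w.2)]

theorem exists_isSaddleSolution (hζ₀ : 0 < ζ₀) (ha_symm : ∀ u v, a u v = a v u)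
    (ha_nonneg : ∀ u, 0 ≤ a u u) (ha_def : ∀ u, a u u = 0 → u = 0)
    (hc_symm : ∀ p q, c p q = c q p) (hc_nonneg : ∀ p, 0 ≤ c p p)
    (hb_cont : ∃ ζ : ℝ, ∀ v p, b v p ≤ ζ * √(a v v) * nB p)
    (hinfsup : ∀ p : Q, ∃ vp : V, b vp p = nB p ^ 2 ∧ ζ₀ * √(a vp vp) ≤ nB p)
    (henergy_def : ∀ w, energyNorm a c nB w = 0 → w = 0)
    (hcompl : IsCompleteFor (energyNorm a c nB)) {f : V →ₗ[ℝ] ℝ} {g : Q →ₗ[ℝ] ℝ} {M : ℝ}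
    (hM : 0 ≤ M) (hfg : ∀ w : V × Q, |f w.1 + g w.2| ≤ M * energyNorm a c nB w) :
    ∃ w, IsSaddleSolution a b c f g w := by
  obtain ⟨ζ, hb⟩ := hb_cont
  have hV : IsCompleteFor fun u => √(a u u) :=
    hcompl.of_retract (AddMonoidHom.inl V Q) (AddMonoidHom.fst V Q) (fun _ => rfl) one_pos one_pos
      (fun u => by rw [AddMonoidHom.inl_apply, energyNorm_inl, one_mul])
      (fun w => by rw [AddMonoidHom.coe_fst, one_mul]; exact sqrt_le_energyNorm hc_nonneg w)
  obtain ⟨L, hL⟩ := exists_linearMap_bilin_eq ha_symm ha_nonneg ha_def hV b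
    fun p => ⟨_, (abs_le_of_le_mul_sqrt hb · p)⟩
  obtain ⟨x, hx⟩ := exists_bilin_eq_of_abs_le ha_symm ha_nonneg ha_def hV f (C := M)
    fun u => by simpa [energyNorm_inl] using hfg (u, 0)
  have hbound (q : Q) : |(a x).comp L q - g q| ≤
      (√(a x x) + M * √(1 + (ζ₀ ^ 2)⁻¹)) * √(schurComplement a L c q q) := by
    have hx_le : |a x (L q)| ≤ √(a x x) * √(schurComplement a L c q q) := by
      rw [← Real.sqrt_mul (ha_nonneg x), schurComplement_apply]
      refine Real.abs_le_sqrt ((bilin_sq_le ha_symm ha_nonneg x (L q)).trans ?_)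
      exact mul_le_mul_of_nonneg_left (le_add_of_nonneg_right (hc_nonneg q)) (ha_nonneg x)
    have hg_le : |g q| ≤ M * √(1 + (ζ₀ ^ 2)⁻¹) * √(schurComplement a L c q q) := by
      calc |g q| ≤ M * energyNorm a c nB (0, q) := by simpa using hfg (0, q)
        _ ≤ M * (√(1 + (ζ₀ ^ 2)⁻¹) * √(schurComplement a L c q q)) := by
          gcongr
          exact energyNorm_inr_le hζ₀ ha_symm ha_nonneg hc_nonneg hinfsup hL q
        _ = _ := by ring
    calc |(a x).comp L q - g q| ≤ |a x (L q)| + |g q| := abs_sub _ _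
      _ ≤ _ := add_le_add hx_le hg_le
      _ = _ := by ring
  obtain ⟨p, hp⟩ := exists_bilin_eq_of_abs_le (schurComplement_symm ha_symm hc_symm L)
    (schurComplement_nonneg ha_nonneg hc_nonneg L)
    (schurComplement_definite hζ₀ ha_symm ha_nonneg hc_nonneg hinfsup henergy_def hL)
    (isCompleteFor_schurComplement hζ₀ ha_symm ha_nonneg hc_nonneg hb hinfsup hcompl hL)
    ((a x).comp L - g) hbound
  refine ⟨(x - L p, p), fun v => ?_, fun q => ?_⟩
  · rw [map_sub, LinearMap.sub_apply, hL, hx]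
    ring
  · have hpq := hp q
    rw [schurComplement_apply, LinearMap.sub_apply, LinearMap.comp_apply] at hpq
    rw [← hL, ha_symm, map_sub, LinearMap.sub_apply]
    linarith

theorem IsSaddleSolution.sub {f : V →ₗ[ℝ] ℝ} {g : Q →ₗ[ℝ] ℝ} {w w' : V × Q}
    (hw : IsSaddleSolution a b c f g w) (hw' : IsSaddleSolution a b c f g w') :
    IsSaddleSolution a b c 0 0 (w - w') := by
  refine ⟨fun v => ?_, fun q => ?_⟩
  · simp only [Prod.fst_sub, Prod.snd_sub, map_sub, LinearMap.sub_apply, LinearMap.zero_apply]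
    linarith [hw.1 v, hw'.1 v]
  · simp only [Prod.fst_sub, Prod.snd_sub, map_sub, LinearMap.sub_apply, LinearMap.zero_apply]
    linarith [hw.2 q, hw'.2 q]

theorem IsSaddleSolution.unique (hζ₀ : 0 < ζ₀) (ha_symm : ∀ u v, a u v = a v u)
    (ha_nonneg : ∀ u, 0 ≤ a u u) (hc_nonneg : ∀ p, 0 ≤ c p p)
    (hinfsup : ∀ p : Q, ∃ vp : V, b vp p = nB p ^ 2 ∧ ζ₀ * √(a vp vp) ≤ nB p)
    (henergy_def : ∀ w, energyNorm a c nB w = 0 → w = 0) {f : V →ₗ[ℝ] ℝ} {g : Q →ₗ[ℝ] ℝ}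
    {w w' : V × Q} (hw : IsSaddleSolution a b c f g w) (hw' : IsSaddleSolution a b c f g w') :
    w = w' := by
  have h0 := energyNorm_le_of_isSaddleSolution hζ₀ ha_symm ha_nonneg hc_nonneg hinfsup le_rfl
    (fun _ => by simp) (hw.sub hw')
  rw [mul_zero] at h0
  exact sub_eq_zero.mp (henergy_def _ (le_antisymm h0 (Real.sqrt_nonneg _)))

end SaddlePoint

/-- Abstract well-posedness of the perturbed saddle-point problem (Theorem 3.1):
under the assumptions on `A`, `B`, `C` and completeness of `V × Q` in the energy norm,
for every bounded right-hand side `(f,g)` the problem `𝒜(u,p) = (f,g)` has a unique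
solution, with energy norm bounded by `C₀ ‖(f,g)‖`, where `C₀` depends only on `ζ₀`. -/
theorem stmt_3 (ζ₀ : ℝ) (hζ₀ : 0 < ζ₀) :
    ∃ C₀ : ℝ, 0 < C₀ ∧
      ∀ (V Q : Type) [AddCommGroup V] [Module ℝ V] [AddCommGroup Q] [Module ℝ Q]
        (a : V →ₗ[ℝ] V →ₗ[ℝ] ℝ)
        (b : V →ₗ[ℝ] Q →ₗ[ℝ] ℝ)
        (c : Q →ₗ[ℝ] Q →ₗ[ℝ] ℝ)
        (nB : Seminorm ℝ Q)
        (enormE : V × Q → ℝ),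
        (∀ u v : V, a u v = a v u) →
        (∀ u : V, 0 ≤ a u u) →
        (∀ u : V, a u u = 0 → u = 0) →
        (∀ p q : Q, c p q = c q p) →
        (∀ p : Q, 0 ≤ c p p) →
        (∀ w : V × Q, enormE w = Real.sqrt (a w.1 w.1 + (nB w.2) ^ 2 + c w.2 w.2)) →
        -- continuity of B with some constant ζ∞
        (∃ ζinf : ℝ, ∀ (v : V) (p : Q), b v p ≤ ζinf * Real.sqrt (a v v) * nB p) →
        -- inf-sup condition with constant ζ₀
        (∀ p : Q, ∃ vp : V, b vp p = (nB p) ^ 2 ∧ ζ₀ * Real.sqrt (a vp vp) ≤ nB p) →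
        -- the energy expression is a norm
        (∀ w : V × Q, enormE w = 0 → w = 0) →
        -- completeness of V × Q in the energy norm
        (∀ s : ℕ → V × Q,
          (∀ ε > (0 : ℝ), ∃ N, ∀ m ≥ N, ∀ n ≥ N, enormE (s m - s n) < ε) →
          ∃ w : V × Q, ∀ ε > (0 : ℝ), ∃ N, ∀ n ≥ N, enormE (s n - w) < ε) →
        ∀ (f : V →ₗ[ℝ] ℝ) (g : Q →ₗ[ℝ] ℝ) (M : ℝ), 0 ≤ M →
          (∀ w : V × Q, |f w.1 + g w.2| ≤ M * enormE w) →
          (∃! w : V × Q,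
            (∀ v : V, a w.1 v + b v w.2 = f v) ∧
            (∀ q : Q, b w.1 q - c w.2 q = g q)) ∧
          (∀ w : V × Q,
            (∀ v : V, a w.1 v + b v w.2 = f v) →
            (∀ q : Q, b w.1 q - c w.2 q = g q) →
            enormE w ≤ C₀ * M) := by
  refine ⟨stabilityConst ζ₀, stabilityConst_pos hζ₀, ?_⟩
  intro V Q _ _ _ _ a b c nB enormE ha_symm ha_nonneg ha_def hc_symm hc_nonneg henorm hb_cont
    hinfsup henorm_def hcompl f g M hM hfg
  obtain rfl : enormE = energyNorm a c nB := funext henorm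
  obtain ⟨w, hw⟩ := exists_isSaddleSolution hζ₀ ha_symm ha_nonneg ha_def hc_symm hc_nonneg
    hb_cont hinfsup henorm_def hcompl hM hfg
  refine ⟨⟨w, hw, fun w' hw' => ?_⟩, fun w' h₁ h₂ => ?_⟩
  · exact IsSaddleSolution.unique hζ₀ ha_symm ha_nonneg hc_nonneg hinfsup henorm_def hw' hw
  · exact energyNorm_le_of_isSaddleSolution hζ₀ ha_symm ha_nonneg hc_nonneg hinfsup hM hfg ⟨h₁, h₂⟩
end

section
/- Let H be a Hilbert space, 𝒜 : H → H' a bounded, symmetric, invertible linear operator, and ℬ : H' → H the Riesz map associated with an inner product whose norm is equivalent to ‖·‖_H with equivalence constants c₁, c₂ (c₁‖x‖² ≤ (x,x)_ℬ ≤ c₂‖x‖²). Then the spectrum of the preconditioned operator ℬ𝒜 : H → H is real, bounded, and bounded away from zero, with bounds depending only on c₁, c₂, the continuity constant of 𝒜, and the inf-sup constant of 𝒜. -/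
/-- Cauchy–Schwarz for a symmetric positive semidefinite bilinear form. -/
lemma aux_cs {H : Type} [AddCommGroup H] [Module ℝ H]
    (ip : H →ₗ[ℝ] H →ₗ[ℝ] ℝ) (hsymm : ∀ x y : H, ip x y = ip y x)
    (hpos : ∀ v : H, 0 ≤ ip v v) (x y : H) :
    (ip x y) ^ 2 ≤ ip x x * ip y y := by
  have h : ∀ t : ℝ, 0 ≤ ip y y * (t * t) + (2 * ip x y) * t + ip x x := by
    intro t
    have h0 := hpos (x + t • y)
    simp only [map_add, map_smul, LinearMap.add_apply, LinearMap.smul_apply,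
      smul_eq_mul] at h0
    rw [hsymm y x] at h0
    nlinarith [h0]
  have hd := discrim_le_zero h
  rw [discrim] at hd
  nlinarith [hd]

/-- Operator preconditioning (Mardal–Winther): if `𝒜 : H → H'` is bounded, symmetric and
invertible (continuity constant `CA`, inf-sup constant `γ`) and `ℬ : H' → H` is the Riesz
map of an inner product whose norm is equivalent to `‖·‖_H` with constants `c₁, c₂`, then
the spectrum of `ℬ𝒜 : H → H` (real, since the scalar field is `ℝ`) is bounded and bounded
away from zero, with bounds depending only on `c₁, c₂, CA, γ`. -/
theorem stmt_12 (c₁ c₂ CA γ : ℝ) (hc₁ : 0 < c₁) (hc₂ : 0 < c₂) (hCA : 0 < CA) (hγ : 0 < γ) :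
    ∃ m Mb : ℝ, 0 < m ∧
      ∀ (H : Type) [NormedAddCommGroup H] [InnerProductSpace ℝ H] [CompleteSpace H],
      ∀ (A : H →L[ℝ] (H →L[ℝ] ℝ)),
        (∀ x y : H, A x y = A y x) →
        Function.Bijective A →
        (∀ x y : H, |A x y| ≤ CA * ‖x‖ * ‖y‖) →
        (∀ x : H, γ * ‖x‖ ≤ ‖A x‖) →
      ∀ (B : (H →L[ℝ] ℝ) →L[ℝ] H) (ip : H →ₗ[ℝ] H →ₗ[ℝ] ℝ),
        (∀ x y : H, ip x y = ip y x) →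
        (∀ x : H, c₁ * ‖x‖ ^ 2 ≤ ip x x) →
        (∀ x : H, ip x x ≤ c₂ * ‖x‖ ^ 2) →
        (∀ (f : H →L[ℝ] ℝ) (x : H), ip (B f) x = f x) →
        ∀ z ∈ spectrum ℝ (B.comp A), m ≤ |z| ∧ |z| ≤ Mb := by
  refine ⟨γ / c₂, CA / c₁, by positivity, ?_⟩
  intro H _ _ _ A hAsymm hAbij hAbdd hAinf B ip hsymm hlow hupp hB z hz
  set T := B.comp A with hT
  -- positivity of the form
  have hpos : ∀ v : H, 0 ≤ ip v v := fun v =>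
    le_trans (by positivity) (hlow v)
  -- Cauchy-Schwarz bound on ip
  have hip : ∀ x y : H, |ip x y| ≤ c₂ * ‖x‖ * ‖y‖ := by
    intro x y
    have h1 := aux_cs ip hsymm hpos x y
    have h2 := hupp x
    have h3 := hupp y
    have h4 : (ip x y) ^ 2 ≤ (c₂ * ‖x‖ * ‖y‖) ^ 2 := by nlinarith [hpos x, hpos y]
    have h5 : (0:ℝ) ≤ c₂ * ‖x‖ * ‖y‖ := by positivity
    nlinarith [sq_abs (ip x y), abs_nonneg (ip x y)]
  -- bound ‖A x‖ ≤ CA ‖x‖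
  have hAx : ∀ x : H, ‖A x‖ ≤ CA * ‖x‖ := by
    intro x
    refine ContinuousLinearMap.opNorm_le_bound _ (by positivity) fun y => ?_
    rw [Real.norm_eq_abs]
    calc |A x y| ≤ CA * ‖x‖ * ‖y‖ := hAbdd x y
      _ = CA * ‖x‖ * ‖y‖ := rfl
  -- bound ‖B f‖ ≤ c₁⁻¹ ‖f‖
  have hBle : ∀ f : H →L[ℝ] ℝ, ‖B f‖ ≤ c₁⁻¹ * ‖f‖ := by
    intro f
    rcases eq_or_ne (B f) 0 with h | h
    · rw [h, norm_zero]; positivity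
    · have h1 := hlow (B f)
      have h2 : ip (B f) (B f) = f (B f) := hB f (B f)
      have h3 : f (B f) ≤ ‖f‖ * ‖B f‖ := by
        calc f (B f) ≤ |f (B f)| := le_abs_self _
          _ = ‖f (B f)‖ := (Real.norm_eq_abs _).symm
          _ ≤ ‖f‖ * ‖B f‖ := f.le_opNorm _
      have h4 : 0 < ‖B f‖ := norm_pos_iff.mpr h
      rw [inv_mul_eq_div, le_div_iff₀ hc₁]
      nlinarith [h1, h3]
  -- bound ‖f‖ ≤ c₂ ‖B f‖
  have hBge : ∀ f : H →L[ℝ] ℝ, ‖f‖ ≤ c₂ * ‖B f‖ := by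
    intro f
    refine ContinuousLinearMap.opNorm_le_bound _ (by positivity) fun x => ?_
    rw [Real.norm_eq_abs, ← hB f x]
    calc |ip (B f) x| ≤ c₂ * ‖B f‖ * ‖x‖ := hip _ _
      _ = c₂ * ‖B f‖ * ‖x‖ := rfl
  -- bounds on T
  have hTub : ∀ x : H, ‖T x‖ ≤ CA / c₁ * ‖x‖ := by
    intro x
    have h1 : T x = B (A x) := rfl
    rw [h1]
    calc ‖B (A x)‖ ≤ c₁⁻¹ * ‖A x‖ := hBle _
      _ ≤ c₁⁻¹ * (CA * ‖x‖) := by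
          exact mul_le_mul_of_nonneg_left (hAx x) (by positivity)
      _ = CA / c₁ * ‖x‖ := by ring
  have hTlb : ∀ x : H, γ / c₂ * ‖x‖ ≤ ‖T x‖ := by
    intro x
    have h1 : ‖A x‖ ≤ c₂ * ‖B (A x)‖ := hBge _
    have h2 := hAinf x
    have h3 : T x = B (A x) := rfl
    rw [h3, div_mul_eq_mul_div, div_le_iff₀ hc₂]
    nlinarith
  -- T is bijective
  have hinj : Function.Injective T := by
    intro a b hab
    have h1 := hTlb (a - b)
    have h2 : T (a - b) = 0 := by rw [map_sub, hab, sub_self]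
    rw [h2, norm_zero] at h1
    have h3 : ‖a - b‖ ≤ 0 := by
      by_contra hcon
      push_neg at hcon
      nlinarith [div_pos hγ hc₂]
    rw [← sub_eq_zero]
    exact norm_le_zero_iff.mp h3
  have hsurj : Function.Surjective T := by
    intro x
    -- the functional y ↦ ip x y is continuous
    set g : H →L[ℝ] ℝ :=
      LinearMap.mkContinuous (ip x) (c₂ * ‖x‖) (fun y => by
        rw [Real.norm_eq_abs]; exact hip x y) with hg
    have hBg : B g = x := by
      have hd : ∀ y : H, ip (B g - x) y = 0 := by
        intro y
        have h1 : ip (B g) y = g y := hB g y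
        have h2 : g y = ip x y := rfl
        simp only [map_sub, LinearMap.sub_apply, h1, h2, sub_self]
      have h3 := hlow (B g - x)
      have h4 := hd (B g - x)
      rw [h4] at h3
      have h5 : ‖B g - x‖ = 0 := by
        by_contra hcon
        have h6 : 0 < ‖B g - x‖ := lt_of_le_of_ne (norm_nonneg _) (Ne.symm hcon)
        nlinarith [mul_pos hc₁ (mul_pos h6 h6)]
      exact sub_eq_zero.mp (norm_eq_zero.mp h5)
    obtain ⟨w, hw⟩ := hAbij.2 g
    exact ⟨w, by simp [hT, ContinuousLinearMap.comp_apply, hw, hBg]⟩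
  have hbij : Function.Bijective T := ⟨hinj, hsurj⟩
  -- T is a unit
  have hunit : IsUnit T := ContinuousLinearMap.isUnit_iff_bijective.mpr hbij
  obtain ⟨u, hu⟩ := hunit
  -- z ≠ 0
  have hz0 : z ≠ 0 := by
    intro h
    rw [h] at hz
    exact ((spectrum.zero_mem_iff ℝ).mp hz) (hu ▸ u.isUnit)
  -- norm of 1 in the operator algebra
  have hone : ‖(1 : H →L[ℝ] H)‖ ≤ 1 := ContinuousLinearMap.norm_id_le
  constructor
  · -- lower bound via spectrum of the inverse
    have hinv : (z⁻¹ : ℝ) ∈ spectrum ℝ ((↑u⁻¹ : H →L[ℝ] H)) := by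
      have := (spectrum.inv_mem_iff (r := Units.mk0 z hz0) (a := u)).mp (by rwa [hu])
      simpa using this
    have hninv : ‖(↑u⁻¹ : H →L[ℝ] H)‖ ≤ c₂ / γ := by
      refine ContinuousLinearMap.opNorm_le_bound _ (by positivity) fun y => ?_
      have h1 : T ((↑u⁻¹ : H →L[ℝ] H) y) = y := by
        have h2 : (↑u * ↑u⁻¹ : H →L[ℝ] H) = 1 := by
          rw [← Units.val_mul, mul_inv_cancel, Units.val_one]
        have h3 := congrArg (fun (S : H →L[ℝ] H) => S y) h2
        simpa [hu] using h3
      have h4 := hTlb ((↑u⁻¹ : H →L[ℝ] H) y)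
      rw [h1] at h4
      rw [div_mul_eq_mul_div, div_le_iff₀ hc₂] at h4
      rw [div_mul_eq_mul_div, le_div_iff₀ hγ]
      nlinarith
    have h5 := spectrum.norm_le_norm_mul_of_mem hinv
    rw [Real.norm_eq_abs, abs_inv] at h5
    have h6 : |z|⁻¹ ≤ c₂ / γ := by
      calc |z|⁻¹ ≤ ‖(↑u⁻¹ : H →L[ℝ] H)‖ * ‖(1 : H →L[ℝ] H)‖ := h5
        _ ≤ c₂ / γ * 1 := by
            exact mul_le_mul hninv hone (norm_nonneg _) (by positivity)
        _ = c₂ / γ := mul_one _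
    have h7 : 0 < |z| := abs_pos.mpr hz0
    have h8 : (c₂ / γ)⁻¹ ≤ (|z|⁻¹)⁻¹ := by
      apply inv_anti₀ (inv_pos.mpr h7) h6
    rwa [inv_inv, inv_div] at h8
  · -- upper bound
    have h5 := spectrum.norm_le_norm_mul_of_mem hz
    rw [Real.norm_eq_abs] at h5
    have hTn : ‖T‖ ≤ CA / c₁ :=
      ContinuousLinearMap.opNorm_le_bound _ (by positivity) hTub
    calc |z| ≤ ‖T‖ * ‖(1 : H →L[ℝ] H)‖ := h5
      _ ≤ CA / c₁ * 1 := mul_le_mul hTn hone (norm_nonneg _) (by positivity)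
      _ = CA / c₁ := mul_one _
end

section
/- Under the assumptions of the Trace formulation (bounded Lipschitz domains Ω_S, Ω_D sharing interface Γ, Stokes inf-sup on Ω_S, bounded divergence-free extension of normal traces from H^{1/2}(Γ) to H¹(Ω_S)^d vanishing tangentially on Γ), the bilinear form B(u, (p_S,p_D)) = −(∇·u, p_S)_{Ω_S} + ⟨n·u, p_D⟩_Γ satisfies: for every (p_S, p_D) there is u ∈ V with B(u,(p_S,p_D)) = (2μ)^{-1}(‖p_S‖²_{L²(Ω_S)} + ‖p_D‖²_{H^{-1/2}(Γ)}) and √(2μ)‖ε(u)‖_{L²(Ω_S)} ≲ (2μ)^{-1/2}(‖p_S‖²_{L²} + ‖p_D‖²_{H^{-1/2}(Γ)})^{1/2}. -/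
/-- Inf-sup condition of the Trace formulation (part of Theorem 3.3): given the Stokes
inf-sup on `Ω_S` (divergence-controlled test function vanishing on `Γ`) and a bounded
divergence-free extension of normal traces, for every `(p_S, p_D)` there is `u` with
`B(u,(p_S,p_D)) = (2μ)⁻¹(‖p_S‖² + ‖p_D‖²_{−1/2,Γ})` and
`√(2μ)‖ε(u)‖ ≲ (2μ)^{−1/2}(‖p_S‖² + ‖p_D‖²_{−1/2,Γ})^{1/2}`.
Abstract encoding: `Λ` is `H^{1/2}(Γ)` (Hilbert), `p_D ∈ Λ'`, `epsN u = ‖ε(u)‖`,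
`B(u,(p_S,p_D)) = −(dvg u, p_S) + p_D(Tn u)`. -/
theorem stmt_14 {V QS Λ : Type*}
    [AddCommGroup V] [Module ℝ V]
    [NormedAddCommGroup QS] [InnerProductSpace ℝ QS]
    [NormedAddCommGroup Λ] [InnerProductSpace ℝ Λ] [CompleteSpace Λ]
    (epsN : Seminorm ℝ V)
    (dvg : V →ₗ[ℝ] QS)
    (Tn : V →ₗ[ℝ] Λ)
    (cS cE : ℝ)
    -- Stokes inf-sup: v^{p_S} with zero trace on Γ, ∇·v = −p_S, ‖ε(v)‖ ≲ ‖p_S‖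
    (hstokes : ∀ pS : QS, ∃ v : V, Tn v = 0 ∧ dvg v = -pS ∧ epsN v ≤ cS * ‖pS‖)
    -- bounded divergence-free extension of normal traces
    (hext : ∀ φ : Λ, ∃ v : V, Tn v = φ ∧ dvg v = 0 ∧ epsN v ≤ cE * ‖φ‖) :
    ∃ C : ℝ, 0 < C ∧
      ∀ μ : ℝ, 0 < μ → ∀ (pS : QS) (pD : Λ →L[ℝ] ℝ),
        ∃ u : V,
          (-(inner ℝ (dvg u) pS : ℝ) + pD (Tn u)
            = (2 * μ)⁻¹ * (‖pS‖ ^ 2 + ‖pD‖ ^ 2)) ∧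
          Real.sqrt (2 * μ) * epsN u
            ≤ C * (Real.sqrt (2 * μ))⁻¹ * Real.sqrt (‖pS‖ ^ 2 + ‖pD‖ ^ 2) := by
  refine ⟨|cS| + |cE| + 1, by positivity, ?_⟩
  intro μ hμ pS pD
  obtain ⟨vS, hTnS, hdvgS, hεS⟩ := hstokes pS
  -- Riesz representative of pD
  set φ : Λ := (InnerProductSpace.toDual ℝ Λ).symm pD with hφ
  have hφn : ‖φ‖ = ‖pD‖ := by
    exact (InnerProductSpace.toDual ℝ Λ).symm.norm_map pD
  have hφval : pD φ = ‖pD‖ ^ 2 := by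
    have h1 : (inner ℝ φ φ : ℝ) = pD φ := InnerProductSpace.toDual_symm_apply
    have h2 : (inner ℝ φ φ : ℝ) = ‖φ‖ ^ 2 := real_inner_self_eq_norm_sq φ
    rw [← h1, h2, hφn]
  obtain ⟨vD, hTnD, hdvgD, hεD⟩ := hext φ
  have h2μ : (0:ℝ) < 2 * μ := by linarith
  refine ⟨(2 * μ)⁻¹ • (vS + vD), ?_, ?_⟩
  · have hdvg : dvg ((2 * μ)⁻¹ • (vS + vD)) = (2 * μ)⁻¹ • (-pS) := by
      simp [map_add, hdvgS, hdvgD]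
    have hTn : Tn ((2 * μ)⁻¹ • (vS + vD)) = (2 * μ)⁻¹ • φ := by
      simp [map_add, hTnS, hTnD]
    rw [hdvg, hTn]
    rw [real_inner_smul_left, inner_neg_left, real_inner_self_eq_norm_sq]
    rw [map_smul, smul_eq_mul, hφval]
    ring
  · have hkey : epsN ((2 * μ)⁻¹ • (vS + vD))
        ≤ (2 * μ)⁻¹ * ((|cS| + |cE|) * Real.sqrt (‖pS‖ ^ 2 + ‖pD‖ ^ 2)) := by
      rw [map_smul_eq_mul]
      have hadd : epsN (vS + vD) ≤ epsN vS + epsN vD := map_add_le_add epsN vS vD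
      have hpS : ‖pS‖ ≤ Real.sqrt (‖pS‖ ^ 2 + ‖pD‖ ^ 2) := by
        have h := Real.sqrt_le_sqrt (le_add_of_nonneg_right (by positivity : (0:ℝ) ≤ ‖pD‖ ^ 2) : ‖pS‖ ^ 2 ≤ ‖pS‖ ^ 2 + ‖pD‖ ^ 2)
        rwa [Real.sqrt_sq (norm_nonneg _)] at h
      have hpD : ‖pD‖ ≤ Real.sqrt (‖pS‖ ^ 2 + ‖pD‖ ^ 2) := by
        have h := Real.sqrt_le_sqrt (le_add_of_nonneg_left (by positivity : (0:ℝ) ≤ ‖pS‖ ^ 2) : ‖pD‖ ^ 2 ≤ ‖pS‖ ^ 2 + ‖pD‖ ^ 2)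
        rwa [Real.sqrt_sq (norm_nonneg _)] at h
      have h1 : epsN vS ≤ |cS| * Real.sqrt (‖pS‖ ^ 2 + ‖pD‖ ^ 2) := by
        calc epsN vS ≤ cS * ‖pS‖ := hεS
          _ ≤ |cS| * ‖pS‖ := by
              exact mul_le_mul_of_nonneg_right (le_abs_self cS) (norm_nonneg _)
          _ ≤ |cS| * Real.sqrt (‖pS‖ ^ 2 + ‖pD‖ ^ 2) :=
              mul_le_mul_of_nonneg_left hpS (abs_nonneg _)
      have h2 : epsN vD ≤ |cE| * Real.sqrt (‖pS‖ ^ 2 + ‖pD‖ ^ 2) := by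
        calc epsN vD ≤ cE * ‖φ‖ := hεD
          _ ≤ |cE| * ‖φ‖ := mul_le_mul_of_nonneg_right (le_abs_self cE) (norm_nonneg _)
          _ = |cE| * ‖pD‖ := by rw [hφn]
          _ ≤ |cE| * Real.sqrt (‖pS‖ ^ 2 + ‖pD‖ ^ 2) :=
              mul_le_mul_of_nonneg_left hpD (abs_nonneg _)
      have : ‖(2 * μ)⁻¹‖ = (2 * μ)⁻¹ := by
        rw [Real.norm_eq_abs, abs_of_pos (by positivity)]
      rw [this]
      have := add_le_add h1 h2
      nlinarith [Real.sqrt_nonneg (‖pS‖ ^ 2 + ‖pD‖ ^ 2), inv_nonneg.mpr h2μ.le]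
    have hspos : 0 < Real.sqrt (2 * μ) := Real.sqrt_pos.mpr h2μ
    have hsqrt : Real.sqrt (2 * μ) * (2 * μ)⁻¹ = (Real.sqrt (2 * μ))⁻¹ := by
      have hss : Real.sqrt (2 * μ) * Real.sqrt (2 * μ) = 2 * μ := Real.mul_self_sqrt h2μ.le
      have h2 : Real.sqrt 2 * Real.sqrt μ = Real.sqrt (2 * μ) := (Real.sqrt_mul (by norm_num) μ).symm
      field_simp
      rw [sq]
      exact hss
    calc Real.sqrt (2 * μ) * epsN ((2 * μ)⁻¹ • (vS + vD))
        ≤ Real.sqrt (2 * μ) * ((2 * μ)⁻¹ * ((|cS| + |cE|) * Real.sqrt (‖pS‖ ^ 2 + ‖pD‖ ^ 2))) :=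
          mul_le_mul_of_nonneg_left hkey (Real.sqrt_nonneg _)
      _ = (|cS| + |cE|) * (Real.sqrt (2 * μ))⁻¹ * Real.sqrt (‖pS‖ ^ 2 + ‖pD‖ ^ 2) := by
          rw [← mul_assoc, hsqrt]; ring
      _ ≤ (|cS| + |cE| + 1) * (Real.sqrt (2 * μ))⁻¹ * Real.sqrt (‖pS‖ ^ 2 + ‖pD‖ ^ 2) := by
          have : (0:ℝ) ≤ (Real.sqrt (2 * μ))⁻¹ * Real.sqrt (‖pS‖ ^ 2 + ‖pD‖ ^ 2) := by positivity
          nlinarith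
end
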